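/- For all p > 1 and all integers j ≥ 1, the sine Fourier coefficients of s_p(x) = sin_p(π_p x) satisfy |ŝ_p(j)| < 4π_p/(j²π²). -/

import Mathlib

open Real

noncomputable def pip (p : ℝ) : ℝ := 2 * π / (p * Real.sin (π / p))

noncomputable def Fp (p y : ℝ) : ℝ :=
  ∫ t in (0:ℝ)..y, (1 - t ^ p) ^ (-1 / p)

open Set MeasureTheory

/-!
By the symmetry `s (1 - x) = s x`, the coefficient vanishes for even `j` and equals
`4 ∫₀^{1/2} s(x) sin(jπx) dx` for odd `j`. On `[0, 1/2]`, `s` inverts `F_p / π_p`, so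
`s' = π_p (1 - s^p)^{1/p}` decreases strictly from `π_p` to `s'(1/2) ≥ 0`. Integrating by parts
twice (using `s 0 = 0` and `cos (jπ/2) = 0`) gives
`∫₀^{1/2} s(x) sin(jπx) dx = (s'(1/2) sin(jπ/2) - ∫₀^{1/2} s''(x) sin(jπx) dx) / (jπ)²`, and
`|∫ s'' sin(jπx)| < ∫ (-s'') = π_p - s'(1/2)` because `-s'' > 0` and `|sin(jπx)| < 1` near `0`.
-/

theorem StrictMonoOn.continuousOn_Icc_of_image_eq {α β : Type*} [LinearOrder α]
    [TopologicalSpace α] [OrderTopology α] [LinearOrder β] [TopologicalSpace β] [OrderTopology β]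
    [DenselyOrdered β] {f : α → β} {a b : α}
    (hf : StrictMonoOn f (Icc a b)) (himage : f '' Icc a b = Icc (f a) (f b)) :
    ContinuousOn f (Icc a b) := by
  intro x hx
  have hfx : f x ∈ Icc (f a) (f b) := himage ▸ mem_image_of_mem f hx
  rw [← Icc_union_Icc_eq_Icc hx.1 hx.2]
  refine ContinuousWithinAt.union ?_ ?_
  · rcases hx.1.eq_or_lt with rfl | hax
    · simp
    · have hfax : f a < f x := hf (left_mem_Icc.2 (hax.le.trans hx.2)) hx hax
      refine (hf.continuousWithinAt_left_of_image_mem_nhdsWithin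
        (Icc_mem_nhdsLE_of_mem ⟨hax, hx.2⟩) ?_).mono Icc_subset_Iic_self
      rw [himage]; exact Icc_mem_nhdsLE_of_mem ⟨hfax, hfx.2⟩
  · rcases hx.2.eq_or_lt with rfl | hxb
    · simp
    · have hfxb : f x < f b := hf hx (right_mem_Icc.2 (hx.1.trans hxb.le)) hxb
      refine (hf.continuousWithinAt_right_of_image_mem_nhdsWithin
        (Icc_mem_nhdsGE_of_mem ⟨hx.1, hxb⟩) ?_).mono Icc_subset_Ici_self
      rw [himage]; exact Icc_mem_nhdsGE_of_mem ⟨hfx.1, hfxb⟩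

theorem intervalIntegral_pos_of_nonneg_of_pos_on_Ioo {F : ℝ → ℝ} {L δ : ℝ} (hδ : 0 < δ)
    (hδL : δ ≤ L) (hF : IntervalIntegrable F volume 0 L) (hnonneg : ∀ x ∈ Ioo 0 L, 0 ≤ F x)
    (hpos : ∀ x ∈ Ioo 0 δ, 0 < F x) :
    0 < ∫ x in 0..L, F x := by
  have hnonneg' : 0 ≤ᵐ[volume.restrict (Ioc 0 L)] F := by
    rw [← Measure.restrict_congr_set Ioo_ae_eq_Ioc]
    exact (ae_restrict_iff' measurableSet_Ioo).2 (ae_of_all _ hnonneg)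
  have hFδ : IntervalIntegrable F volume 0 δ :=
    hF.mono_set (uIcc_subset_uIcc left_mem_uIcc
      (by simp [uIcc_of_le (hδ.le.trans hδL), hδ.le, hδL]))
  exact (intervalIntegral.intervalIntegral_pos_of_pos_on hFδ hpos hδ).trans_le
    (intervalIntegral.integral_mono_interval le_rfl hδ.le hδL hnonneg' hF)

theorem abs_integral_mul_sin_lt_integral {h : ℝ → ℝ} {L c : ℝ} (hL : 0 < L) (hc : 0 < c)
    (hint : IntervalIntegrable h volume 0 L) (hpos : ∀ x ∈ Ioo 0 L, 0 < h x) :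
    |∫ x in 0..L, h x * sin (c * x)| < ∫ x in 0..L, h x := by
  set δ := min L (π / (2 * c))
  have hδ : 0 < δ := lt_min hL (by positivity)
  -- on `(0, δ)` the argument `c * x` lies in `(0, π / 2)`
  have hsin : ∀ x ∈ Ioo 0 δ, |sin (c * x)| < 1 := by
    intro x hx
    have hcx : 0 < c * x := mul_pos hc hx.1
    have hcx' : c * x < π / 2 := by
      have := hx.2.trans_le (min_le_right _ _)
      rw [lt_div_iff₀ (by positivity)] at this
      linarith
    rw [abs_of_pos (sin_pos_of_pos_of_lt_pi hcx (by linarith [pi_pos]))]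
    calc sin (c * x) < sin (π / 2) :=
          sin_lt_sin_of_lt_of_le_pi_div_two (by linarith [pi_pos]) le_rfl hcx'
      _ = 1 := sin_pi_div_two
  have hsint : IntervalIntegrable (fun x => h x * sin (c * x)) volume 0 L :=
    hint.mul_continuousOn (by fun_prop)
  have key : ∀ ε : ℝ, |ε| ≤ 1 → ε * ∫ x in 0..L, h x * sin (c * x) < ∫ x in 0..L, h x := by
    intro ε hε
    have hεsin : ∀ x, ε * sin (c * x) ≤ |sin (c * x)| := fun x =>
      (le_abs_self _).trans (by rw [abs_mul]; exact mul_le_of_le_one_left (abs_nonneg _) hε)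
    have := intervalIntegral_pos_of_nonneg_of_pos_on_Ioo hδ (min_le_left _ _)
      (hint.mul_continuousOn (by fun_prop) :
        IntervalIntegrable (fun x => h x * (1 - ε * sin (c * x))) volume 0 L)
      (fun x hx => mul_nonneg (hpos x hx).le
        (by linarith [hεsin x, abs_sin_le_one (c * x)]))
      (fun x hx => mul_pos (hpos x ⟨hx.1, hx.2.trans_le (min_le_left _ _)⟩)
        (by linarith [hεsin x, hsin x hx]))
    simp only [mul_sub, mul_one, mul_left_comm (h _) ε] at this
    rw [intervalIntegral.integral_sub hint (hsint.const_mul ε),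
      intervalIntegral.integral_const_mul] at this
    linarith
  rw [abs_lt]
  constructor
  · linarith [key (-1) (by simp)]
  · linarith [key 1 (by simp)]

theorem integral_mul_sin_eq_of_hasDerivAt {f g g' : ℝ → ℝ} {j : ℕ} (hj : Odd j)
    (hf : ContinuousOn f (Icc 0 (1 / 2))) (hf0 : f 0 = 0)
    (hfg : ∀ x ∈ Ioo 0 (1 / 2), HasDerivAt f (g x) x)
    (hg : ContinuousOn g (Icc 0 (1 / 2))) (hgg' : ∀ x ∈ Ioo 0 (1 / 2), HasDerivAt g (g' x) x)
    (hg'int : IntervalIntegrable g' volume 0 (1 / 2)) :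
    ∫ x in 0..1 / 2, f x * sin (j * π * x)
      = (g (1 / 2) * sin (j * π * (1 / 2)) - ∫ x in 0..1 / 2, g' x * sin (j * π * x))
        / (j * π) ^ 2 := by
  set c : ℝ := j * π
  have hc : c ≠ 0 := by have := hj.pos; positivity
  have hcos : cos (c * (1 / 2)) = 0 := by
    obtain ⟨k, rfl⟩ := hj
    exact cos_eq_zero_iff.2 ⟨k, by simp only [c]; push_cast; ring⟩
  have hI : uIcc (0 : ℝ) (1 / 2) = Icc 0 (1 / 2) := uIcc_of_le (by norm_num)
  have hO : Ioo (min (0 : ℝ) (1 / 2)) (max 0 (1 / 2)) = Ioo 0 (1 / 2) := by norm_num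
  have hlin : ∀ x, HasDerivAt (fun x => c * x) c x := fun x => by
    simpa using (hasDerivAt_id x).const_mul c
  have hibp₁ : ∫ x in 0..1 / 2, f x * sin (c * x)
      = (∫ x in 0..1 / 2, g x * cos (c * x)) / c := by
    rw [intervalIntegral.integral_mul_deriv_eq_deriv_mul_of_hasDerivAt
      (v := fun x => -cos (c * x) / c) (v' := fun x => sin (c * x)) (hI ▸ hf) (by fun_prop)
      (hO ▸ hfg) (fun x _ => ((hlin x).cos.neg.div_const c).congr_deriv (by field_simp))
      (hI ▸ hg).intervalIntegrable
      ((by fun_prop : Continuous fun x => sin (c * x)).intervalIntegrable _ _)]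
    simp only [hcos, hf0]
    simp_rw [mul_div_assoc', intervalIntegral.integral_div, mul_neg, intervalIntegral.integral_neg]
    ring
  have hibp₂ : ∫ x in 0..1 / 2, g x * cos (c * x)
      = (g (1 / 2) * sin (c * (1 / 2)) - ∫ x in 0..1 / 2, g' x * sin (c * x)) / c := by
    rw [intervalIntegral.integral_mul_deriv_eq_deriv_mul_of_hasDerivAt
      (v := fun x => sin (c * x) / c) (v' := fun x => cos (c * x)) (hI ▸ hg) (by fun_prop)
      (hO ▸ hgg') (fun x _ => ((hlin x).sin.div_const c).congr_deriv (by field_simp)) hg'int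
      ((by fun_prop : Continuous fun x => cos (c * x)).intervalIntegrable _ _)]
    simp_rw [mul_div_assoc', intervalIntegral.integral_div]
    simp
    ring
  rw [hibp₁, hibp₂, div_div, sq]

theorem abs_integral_mul_sin_lt_of_hasDerivAt {f g g' : ℝ → ℝ} {j : ℕ} (hj : Odd j)
    (hf : ContinuousOn f (Icc 0 (1 / 2))) (hf0 : f 0 = 0)
    (hfg : ∀ x ∈ Ioo 0 (1 / 2), HasDerivAt f (g x) x)
    (hg : ContinuousOn g (Icc 0 (1 / 2))) (hgg' : ∀ x ∈ Ioo 0 (1 / 2), HasDerivAt g (g' x) x)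
    (hg' : ∀ x ∈ Ioo 0 (1 / 2), g' x < 0) (hg_half : 0 ≤ g (1 / 2)) :
    |∫ x in 0..1 / 2, f x * sin (j * π * x)| < g 0 / (j * π) ^ 2 := by
  have hc : 0 < (j : ℝ) * π := by have := hj.pos; positivity
  have hg'int : IntervalIntegrable g' volume 0 (1 / 2) := by
    have hI : uIcc (0 : ℝ) (1 / 2) = Icc 0 (1 / 2) := uIcc_of_le (by norm_num)
    have hO : Ioo (min (0 : ℝ) (1 / 2)) (max 0 (1 / 2)) = Ioo 0 (1 / 2) := by norm_num
    have := intervalIntegral.intervalIntegrable_deriv_of_nonneg (g := fun x => -g x)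
      (hI ▸ hg.neg) (hO ▸ fun x hx => (hgg' x hx).neg)
      (hO ▸ fun x hx => (neg_pos.2 (hg' x hx)).le)
    convert this.neg using 1
    ext x; simp
  have hFTC : ∫ x in 0..1 / 2, g' x = g (1 / 2) - g 0 :=
    intervalIntegral.integral_eq_sub_of_hasDerivAt_of_le (by norm_num) hg hgg' hg'int
  have hS := abs_integral_mul_sin_lt_integral (by norm_num) hc hg'int.neg
    fun x hx => neg_pos.2 (hg' x hx)
  simp only [Pi.neg_apply, neg_mul, intervalIntegral.integral_neg, abs_neg, hFTC] at hS
  have hsin : |g (1 / 2) * sin (j * π * (1 / 2))| ≤ g (1 / 2) := by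
    rw [abs_mul, abs_of_nonneg hg_half]
    exact mul_le_of_le_one_right hg_half (abs_sin_le_one _)
  rw [integral_mul_sin_eq_of_hasDerivAt hj hf hf0 hfg hg hgg' hg'int, abs_div,
    abs_of_pos (pow_pos hc 2)]
  refine div_lt_div_of_pos_right ?_ (pow_pos hc 2)
  calc _ ≤ |g (1 / 2) * sin (j * π * (1 / 2))|
        + |∫ x in 0..1 / 2, g' x * sin (j * π * x)| := abs_sub _ _
    _ < g 0 := by linarith

theorem integral_mul_sin_eq_of_symm {f : ℝ → ℝ} (hsymm : ∀ x, f (1 - x) = f x) (j : ℕ)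
    (hf : IntervalIntegrable (fun x => f x * sin (j * π * x)) volume 0 (1 / 2)) :
    ∫ x in 0..1, f x * sin (j * π * x)
      = (1 - (-1) ^ j) * ∫ x in 0..1 / 2, f x * sin (j * π * x) := by
  set g := fun x => f x * sin (j * π * x)
  have hrefl : ∀ x, g (1 - x) = -(-1) ^ j * g x := fun x => by
    simp only [g, hsymm, mul_one_sub, sin_nat_mul_pi_sub]
    ring
  have hreflg : (fun x => -(-1) ^ j * g (1 - x)) = g := funext fun x => by
    rw [hrefl, ← mul_assoc, neg_mul_neg, ← mul_pow]
    norm_num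
  have hf' : IntervalIntegrable g volume (1 / 2) 1 := by
    have := (hf.comp_sub_left 1).const_mul (-(-1) ^ j)
    rw [hreflg] at this
    norm_num at this
    exact this.symm
  have hmirror : ∫ x in 1 / 2..1, g x = -(-1) ^ j * ∫ x in 0..1 / 2, g x := by
    simp only [← intervalIntegral.integral_const_mul, ← hrefl,
      intervalIntegral.integral_comp_sub_left]
    norm_num
  rw [← intervalIntegral.integral_add_adjacent_intervals hf hf', hmirror]
  ring

theorem pip_pos {p : ℝ} (hp : 1 < p) : 0 < pip p := by
  have hp0 : 0 < p := by linarith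
  have : 0 < Real.sin (π / p) :=
    sin_pos_of_pos_of_lt_pi (by positivity) (div_lt_self pi_pos hp)
  unfold pip
  positivity

section Fp

variable {p : ℝ}

theorem one_sub_rpow_pos (hp : 0 < p) {t : ℝ} (ht0 : 0 ≤ t) (ht1 : t < 1) : 0 < 1 - t ^ p :=
  sub_pos.2 (rpow_lt_one ht0 ht1 hp)

theorem continuousAt_Fp_integrand (hp : 0 < p) {t : ℝ} (ht0 : 0 ≤ t) (ht1 : t < 1) :
    ContinuousAt (fun t => (1 - t ^ p) ^ (-1 / p)) t :=
  (continuousAt_const.sub (continuousAt_rpow_const _ _ (Or.inr hp.le))).rpow_const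
    (Or.inl (one_sub_rpow_pos hp ht0 ht1).ne')

theorem intervalIntegrable_Fp_integrand (hp : 1 < p) :
    IntervalIntegrable (fun t => (1 - t ^ p) ^ (-1 / p)) volume 0 1 := by
  have hp0 : 0 < p := by linarith
  have hdom : IntervalIntegrable (fun t => (1 - t) ^ (-1 / p)) volume 0 1 := by
    have := (intervalIntegral.intervalIntegrable_rpow' (r := -1 / p) (a := 0) (b := 1)
      (by rw [neg_div, neg_lt_neg_iff, div_lt_one hp0]; exact hp)).comp_sub_left 1
    simpa using this.symm
  rw [intervalIntegrable_iff_integrableOn_Ioo_of_le zero_le_one] at hdom ⊢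
  refine hdom.mono' (ContinuousOn.aestronglyMeasurable ?_ measurableSet_Ioo) ?_
  · exact fun t ht => (continuousAt_Fp_integrand hp0 ht.1.le ht.2).continuousWithinAt
  · refine (ae_restrict_iff' measurableSet_Ioo).2 (ae_of_all _ fun t ht => ?_)
    rw [norm_of_nonneg (rpow_nonneg (one_sub_rpow_pos hp0 ht.1.le ht.2).le _)]
    refine rpow_le_rpow_of_nonpos (by linarith [ht.2]) ?_
      (by rw [neg_div]; exact neg_nonpos.2 (by positivity))
    have : t ^ p ≤ t := by simpa using rpow_le_rpow_of_exponent_ge ht.1 ht.2.le hp.le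
    linarith

theorem intervalIntegrable_Fp_integrand_of_mem (hp : 1 < p) {a b : ℝ} (ha : a ∈ Icc (0:ℝ) 1)
    (hb : b ∈ Icc (0:ℝ) 1) :
    IntervalIntegrable (fun t => (1 - t ^ p) ^ (-1 / p)) volume a b :=
  (intervalIntegrable_Fp_integrand hp).mono_set
    (uIcc_subset_uIcc (by simpa using ha) (by simpa using hb))

@[simp]
theorem Fp_zero : Fp p 0 = 0 := intervalIntegral.integral_same

theorem Fp_strictMonoOn (hp : 1 < p) : StrictMonoOn (Fp p) (Icc 0 1) := by
  intro a ha b hb hab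
  have hp0 : 0 < p := by linarith
  rw [← sub_pos, Fp, Fp, intervalIntegral.integral_interval_sub_left
    (intervalIntegrable_Fp_integrand_of_mem hp (left_mem_Icc.2 zero_le_one) hb)
    (intervalIntegrable_Fp_integrand_of_mem hp (left_mem_Icc.2 zero_le_one) ha)]
  exact intervalIntegral.intervalIntegral_pos_of_pos_on
    (intervalIntegrable_Fp_integrand_of_mem hp ha hb)
    (fun t ht => rpow_pos_of_pos (one_sub_rpow_pos hp0 (ha.1.trans ht.1.le) (ht.2.trans_le hb.2)) _)
    hab

theorem hasDerivAt_Fp (hp : 1 < p) {y : ℝ} (hy : y ∈ Ioo (0:ℝ) 1) :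
    HasDerivAt (Fp p) ((1 - y ^ p) ^ (-1 / p)) y := by
  have hp0 : 0 < p := by linarith
  refine intervalIntegral.integral_hasDerivAt_right
    (intervalIntegrable_Fp_integrand_of_mem hp (left_mem_Icc.2 zero_le_one)
      (Ioo_subset_Icc_self hy))
    (ContinuousOn.stronglyMeasurableAtFilter isOpen_Ioo
      (fun t ht => (continuousAt_Fp_integrand hp0 ht.1.le ht.2).continuousWithinAt) y hy)
    (continuousAt_Fp_integrand hp0 hy.1.le hy.2)

end Fp

/-- On `[0, 1/2]`, `s` is the paper's `s_p(x) = sin_p(π_p x)`. The expression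
`pip p * (1 - s x ^ p) ^ (1 / p)` in the `cosp` lemmas below is `s' = π_p cos_p(π_p x)`. -/
def IsSpOnHalf (p : ℝ) (s : ℝ → ℝ) : Prop :=
  ∀ x ∈ Icc (0:ℝ) (1 / 2), s x ∈ Icc (0:ℝ) 1 ∧ Fp p (s x) = pip p * x

namespace IsSpOnHalf

variable {p : ℝ} {s : ℝ → ℝ} (hp : 1 < p) (hs : IsSpOnHalf p s)
include hp hs

theorem map_zero : s 0 = 0 :=
  have h0 : (0:ℝ) ∈ Icc (0:ℝ) (1 / 2) := by norm_num
  (Fp_strictMonoOn hp).injOn (hs 0 h0).1 (left_mem_Icc.2 zero_le_one) <| by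
    rw [(hs 0 h0).2, mul_zero, Fp_zero]

theorem strictMonoOn : StrictMonoOn s (Icc 0 (1 / 2)) := fun x hx y hy hxy => by
  rw [← (Fp_strictMonoOn hp).lt_iff_lt (hs x hx).1 (hs y hy).1, (hs x hx).2, (hs y hy).2]
  exact mul_lt_mul_of_pos_left hxy (pip_pos hp)

theorem image_Icc : s '' Icc 0 (1 / 2) = Icc 0 (s (1 / 2)) := by
  have hhalf : (1 / 2 : ℝ) ∈ Icc (0:ℝ) (1 / 2) := by norm_num
  have hF := Fp_strictMonoOn hp
  refine Subset.antisymm (image_subset_iff.2 fun x hx => ⟨(hs x hx).1.1,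
    (hs.strictMonoOn hp).monotoneOn hx hhalf hx.2⟩) fun y hy => ?_
  have hy1 : y ∈ Icc (0:ℝ) 1 := ⟨hy.1, hy.2.trans (hs _ hhalf).1.2⟩
  have hpip := pip_pos hp
  have hx : Fp p y / pip p ∈ Icc (0:ℝ) (1 / 2) := by
    have h0 := hF.monotoneOn (left_mem_Icc.2 zero_le_one) hy1 hy.1
    have h1 := hF.monotoneOn hy1 (hs _ hhalf).1 hy.2
    rw [Fp_zero] at h0
    rw [(hs _ hhalf).2] at h1
    exact ⟨div_nonneg h0 hpip.le, by rw [div_le_iff₀ hpip]; linarith⟩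
  refine ⟨_, hx, hF.injOn (hs _ hx).1 hy1 ?_⟩
  rw [(hs _ hx).2, mul_div_cancel₀ _ hpip.ne']

theorem continuousOn : ContinuousOn s (Icc 0 (1 / 2)) :=
  (hs.strictMonoOn hp).continuousOn_Icc_of_image_eq (by rw [hs.map_zero hp, hs.image_Icc hp])

theorem mem_Ioo {x : ℝ} (hx : x ∈ Ioo (0:ℝ) (1 / 2)) : s x ∈ Ioo 0 1 := by
  have hmono := hs.strictMonoOn hp
  have hhalf : (1 / 2 : ℝ) ∈ Icc (0:ℝ) (1 / 2) := by norm_num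
  constructor
  · simpa [hs.map_zero hp] using hmono (left_mem_Icc.2 (by norm_num)) (Ioo_subset_Icc_self hx) hx.1
  · exact (hmono (Ioo_subset_Icc_self hx) hhalf hx.2).trans_le (hs _ hhalf).1.2

theorem hasDerivAt {x : ℝ} (hx : x ∈ Ioo (0:ℝ) (1 / 2)) :
    HasDerivAt s (pip p * (1 - s x ^ p) ^ (1 / p)) x := by
  have hpip := pip_pos hp
  have hsx := hs.mem_Ioo hp hx
  have hbase := one_sub_rpow_pos (p := p) (by linarith) hsx.1.le hsx.2
  have hinv := HasDerivAt.of_local_left_inverse (f := fun y => Fp p y / pip p)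
    ((hs.continuousOn hp).continuousAt (Icc_mem_nhds hx.1 hx.2))
    ((hasDerivAt_Fp hp hsx).div_const (pip p))
    (div_pos (rpow_pos_of_pos hbase _) hpip).ne'
    (Filter.mem_of_superset (Ioo_mem_nhds hx.1 hx.2) fun y hy => by
      change Fp p (s y) / pip p = y
      rw [(hs y (Ioo_subset_Icc_self hy)).2, mul_div_cancel_left₀ _ hpip.ne'])
  refine hinv.congr_deriv ?_
  rw [inv_div, neg_div, rpow_neg hbase.le, div_inv_eq_mul]

theorem continuousOn_cosp :
    ContinuousOn (fun x => pip p * (1 - s x ^ p) ^ (1 / p)) (Icc 0 (1 / 2)) :=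
  continuousOn_const.mul <| (continuousOn_const.sub <| (hs.continuousOn hp).rpow_const
    fun _ _ => Or.inr (by linarith)).rpow_const fun _ _ => Or.inr (by positivity)

theorem hasDerivAt_cosp {x : ℝ} (hx : x ∈ Ioo (0:ℝ) (1 / 2)) :
    HasDerivAt (fun x => pip p * (1 - s x ^ p) ^ (1 / p))
      (-(pip p * (1 - s x ^ p) ^ (1 / p - 1) * s x ^ (p - 1)
        * (pip p * (1 - s x ^ p) ^ (1 / p)))) x := by
  have hsx := hs.mem_Ioo hp hx
  have hbase := one_sub_rpow_pos (p := p) (by linarith) hsx.1.le hsx.2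
  refine ((((hs.hasDerivAt hp hx).rpow_const (Or.inl hsx.1.ne')).const_sub 1).rpow_const
    (p := 1 / p) (Or.inl hbase.ne') |>.const_mul (pip p)).congr_deriv ?_
  field_simp

theorem deriv_cosp_neg {x : ℝ} (hx : x ∈ Ioo (0:ℝ) (1 / 2)) :
    -(pip p * (1 - s x ^ p) ^ (1 / p - 1) * s x ^ (p - 1)
      * (pip p * (1 - s x ^ p) ^ (1 / p))) < 0 := by
  have hsx := hs.mem_Ioo hp hx
  have hbase := one_sub_rpow_pos (p := p) (by linarith) hsx.1.le hsx.2
  have := pip_pos hp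
  have := rpow_pos_of_pos hbase (1 / p - 1)
  have := rpow_pos_of_pos hbase (1 / p)
  have := rpow_pos_of_pos hsx.1 (p - 1)
  exact neg_neg_of_pos (by positivity)

theorem cosp_zero : pip p * (1 - s 0 ^ p) ^ (1 / p) = pip p := by
  rw [hs.map_zero hp, zero_rpow (by linarith), sub_zero, one_rpow, mul_one]

theorem cosp_half_nonneg : 0 ≤ pip p * (1 - s (1 / 2) ^ p) ^ (1 / p) := by
  have hhalf := (hs (1 / 2) (by norm_num)).1
  exact mul_nonneg (pip_pos hp).le
    (rpow_nonneg (sub_nonneg.2 (rpow_le_one hhalf.1 hhalf.2 (by linarith))) _)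

end IsSpOnHalf

theorem stmt_15_general (p : ℝ) (hp : 1 < p) (s : ℝ → ℝ)
    (hinv : ∀ x ∈ Set.Icc (0:ℝ) (1/2), s x ∈ Set.Icc (0:ℝ) 1 ∧ Fp p (s x) = pip p * x)
    (heven : ∀ x, s (1 - x) = s x)
    (j : ℕ) (hj : 1 ≤ j) :
    |2 * ∫ x in (0:ℝ)..1, s x * Real.sin (j * π * x)| < 4 * pip p / (j^2 * π^2) := by
  have hs : IsSpOnHalf p s := hinv
  have hint : IntervalIntegrable (fun x => s x * sin (j * π * x)) volume 0 (1 / 2) :=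
    ((hs.continuousOn hp).mul (by fun_prop)).intervalIntegrable_of_Icc (by norm_num)
  rw [integral_mul_sin_eq_of_symm heven j hint]
  rcases j.even_or_odd with hj_even | hj_odd
  · rw [hj_even.neg_one_pow, sub_self, zero_mul, mul_zero, abs_zero]
    have := pip_pos hp
    have : (0 : ℝ) < j := by exact_mod_cast hj
    positivity
  · have hA := abs_integral_mul_sin_lt_of_hasDerivAt hj_odd (hs.continuousOn hp) (hs.map_zero hp)
      (fun x hx => hs.hasDerivAt hp hx) (hs.continuousOn_cosp hp)
      (fun x hx => hs.hasDerivAt_cosp hp hx) (fun x hx => hs.deriv_cosp_neg hp hx)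
      (hs.cosp_half_nonneg hp)
    rw [hs.cosp_zero hp] at hA
    rw [hj_odd.neg_one_pow, abs_mul, abs_mul]
    calc _ = 4 * |∫ x in 0..1 / 2, s x * sin (j * π * x)| := by norm_num; ring
      _ < 4 * (pip p / (j * π) ^ 2) := by gcongr
      _ = _ := by ring

theorem stmt_15 (p : ℝ) (hp : 1 < p) (s : ℝ → ℝ)
    (hinv : ∀ x ∈ Set.Icc (0:ℝ) (1/2), s x ∈ Set.Icc (0:ℝ) 1 ∧ Fp p (s x) = pip p * x)
    (hodd : ∀ x, s (-x) = -s x)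
    (heven : ∀ x, s (1 - x) = s x)
    (hper : ∀ x, s (x + 2) = s x)
    (j : ℕ) (hj : 1 ≤ j) :
    |2 * ∫ x in (0:ℝ)..1, s x * Real.sin (j * π * x)| < 4 * pip p / (j^2 * π^2) :=
  stmt_15_general p hp s hinv heven j hj
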